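/- arXiv:1005.4046 — 4 statements merged into one kernel-verified Lean document; each statement's English description precedes it below -/
import Mathlib

section
/- A permutation w of length n avoiding the pattern 2143 has the property that a value c in [n+1] is not active for w (i.e., the extension w ← c contains the pattern 2143) if and only if there exist indices i < j < k ≤ n such that w_j < w_i < c ≤ w_k. -/
/-- A word `w : Fin n → ℕ` is a permutation of length `n` (1-indexed values). -/
def IsPermWord (n : ℕ) (w : Fin n → ℕ) : Prop :=
  Function.Injective w ∧ Set.range w = Set.Icc 1 n

/-- `w` contains the pattern 2143. -/
def Contains2143 {n : ℕ} (w : Fin n → ℕ) : Prop :=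
  ∃ i1 i2 i3 i4 : Fin n, i1 < i2 ∧ i2 < i3 ∧ i3 < i4 ∧
    w i2 < w i1 ∧ w i1 < w i4 ∧ w i4 < w i3

/-- `w` contains the pattern 1234 (a four-term increasing subsequence). -/
def Contains1234 {n : ℕ} (w : Fin n → ℕ) : Prop :=
  ∃ i1 i2 i3 i4 : Fin n, i1 < i2 ∧ i2 < i3 ∧ i3 < i4 ∧
    w i1 < w i2 ∧ w i2 < w i3 ∧ w i3 < w i4

/-- `w` contains the pattern `p`. -/
def ContainsPat {n k : ℕ} (w : Fin n → ℕ) (p : Fin k → ℕ) : Prop :=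
  ∃ f : Fin k → Fin n, StrictMono f ∧ ∀ a b : Fin k, p a < p b ↔ w (f a) < w (f b)

/-- The extension `w ← c`: bump every entry `≥ c` by one and append `c`. -/
def extendBy {n : ℕ} (w : Fin n → ℕ) (c : ℕ) : Fin (n + 1) → ℕ :=
  fun j => if h : (j : ℕ) < n then (if c ≤ w ⟨j, h⟩ then w ⟨j, h⟩ + 1 else w ⟨j, h⟩) else c

/-- `c` is an active value for `w` (with respect to the pattern 2143). -/
def IsActive {n : ℕ} (w : Fin n → ℕ) (c : ℕ) : Prop :=
  ¬ Contains2143 (extendBy w c)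

/-- `w` is (up-down) alternating: `w 1 < w 2 > w 3 < w 4 > ...` (1-indexed). -/
def Alternating {n : ℕ} (w : Fin n → ℕ) : Prop :=
  ∀ (i : ℕ) (h : i + 1 < n),
    if i % 2 = 0 then w ⟨i, by omega⟩ < w ⟨i + 1, h⟩ else w ⟨i + 1, h⟩ < w ⟨i, by omega⟩

/-- The set of active values for `w` among `{1, ..., n+1}`. -/
def activeSet {n : ℕ} (w : Fin n → ℕ) : Set ℕ :=
  {c | 1 ≤ c ∧ c ≤ n + 1 ∧ IsActive w c}

/-- The reverse-complement of a word of length `m` (1-indexed values). -/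
def revComp {m : ℕ} (w : Fin m → ℕ) : Fin m → ℕ :=
  fun i => m + 1 - w i.rev

/-- `T` is a standard Young tableau of rectangular shape `(n, n, n)`,
entries `1, ..., 3n` each used once, rows and columns strictly increasing. -/
structure IsSYT3 (n : ℕ) (T : Fin 3 → Fin n → ℕ) : Prop where
  inj : Function.Injective (fun p : Fin 3 × Fin n => T p.1 p.2)
  range_eq : (Set.range fun p : Fin 3 × Fin n => T p.1 p.2) = Set.Icc 1 (3 * n)
  row_inc : ∀ i : Fin 3, StrictMono (T i)
  col_inc : ∀ j : Fin n, StrictMono (fun i : Fin 3 => T i j)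

/-- `(T1, T2, T3)` is a shifted standard Young tableau of shape `(n+2, n+1, n)`:
row `i` is indented `i - 1` columns; entries `1, ..., 3n+3` each used once,
rows strictly increasing, and (shifted) columns strictly increasing. -/
structure IsShiftedSYT (n : ℕ) (T1 : Fin (n + 2) → ℕ) (T2 : Fin (n + 1) → ℕ)
    (T3 : Fin n → ℕ) : Prop where
  inj : Function.Injective (Sum.elim T1 (Sum.elim T2 T3))
  range_eq : Set.range (Sum.elim T1 (Sum.elim T2 T3)) = Set.Icc 1 (3 * n + 3)
  row1 : StrictMono T1
  row2 : StrictMono T2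
  row3 : StrictMono T3
  col12 : ∀ j : Fin (n + 1), T1 j.succ < T2 j
  col23 : ∀ j : Fin n, T2 j.succ < T3 j


lemma extendBy_lt_n {n : ℕ} (w : Fin n → ℕ) (c : ℕ) (j : Fin (n+1)) (h : (j:ℕ) < n) :
    extendBy w c j = if c ≤ w ⟨j, h⟩ then w ⟨j, h⟩ + 1 else w ⟨j, h⟩ := by
  simp [extendBy, h]

lemma extendBy_castSucc {n : ℕ} (w : Fin n → ℕ) (c : ℕ) (i : Fin n) :
    extendBy w c i.castSucc = if c ≤ w i then w i + 1 else w i := by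
  simp [extendBy, i.isLt]

lemma extendBy_last {n : ℕ} (w : Fin n → ℕ) (c : ℕ) :
    extendBy w c (Fin.last n) = c := by
  simp [extendBy]

/-- characterization of non-active values for a 2143-avoiding word. -/
theorem stmt1 (n : ℕ) (w : Fin n → ℕ) (hw : IsPermWord n w)
    (havoid : ¬ Contains2143 w) (c : ℕ) (hc1 : 1 ≤ c) (hc2 : c ≤ n + 1) :
    ¬ IsActive w c ↔
      ∃ i j k : Fin n, i < j ∧ j < k ∧ w j < w i ∧ w i < c ∧ c ≤ w k := by
  unfold IsActive
  rw [not_not]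
  constructor
  · rintro ⟨i1, i2, i3, i4, h12, h23, h34, ha, hb, hd⟩
    have h12' : (i1 : ℕ) < (i2 : ℕ) := h12
    have h23' : (i2 : ℕ) < (i3 : ℕ) := h23
    have h34' : (i3 : ℕ) < (i4 : ℕ) := h34
    by_cases h4 : (i4 : ℕ) < n
    · exfalso
      have h3 : (i3 : ℕ) < n := by omega
      have h2 : (i2 : ℕ) < n := by omega
      have h1 : (i1 : ℕ) < n := by omega
      rw [extendBy_lt_n w c i1 h1, extendBy_lt_n w c i2 h2] at ha
      rw [extendBy_lt_n w c i1 h1, extendBy_lt_n w c i4 h4] at hb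
      rw [extendBy_lt_n w c i3 h3, extendBy_lt_n w c i4 h4] at hd
      apply havoid
      refine ⟨⟨i1, h1⟩, ⟨i2, h2⟩, ⟨i3, h3⟩, ⟨i4, h4⟩, h12', h23', h34', ?_, ?_, ?_⟩ <;>
        (split_ifs at ha hb hd <;> omega)
    · have h4' : (i4 : ℕ) = n := by omega
      have h3 : (i3 : ℕ) < n := by omega
      have h2 : (i2 : ℕ) < n := by omega
      have h1 : (i1 : ℕ) < n := by omega
      have hlast : i4 = Fin.last n := by
        ext; simpa using h4'
      rw [hlast, extendBy_last] at hb hd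
      rw [extendBy_lt_n w c i1 h1] at hb
      rw [extendBy_lt_n w c i3 h3] at hd
      rw [extendBy_lt_n w c i1 h1, extendBy_lt_n w c i2 h2] at ha
      refine ⟨⟨i1, h1⟩, ⟨i2, h2⟩, ⟨i3, h3⟩, h12', h23', ?_, ?_, ?_⟩ <;>
        (split_ifs at ha hb hd <;> omega)
  · rintro ⟨i, j, k, hij, hjk, h1, h2, h3⟩
    refine ⟨i.castSucc, j.castSucc, k.castSucc, Fin.last n,
      Fin.castSucc_lt_castSucc_iff.mpr hij, Fin.castSucc_lt_castSucc_iff.mpr hjk,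
      Fin.castSucc_lt_last k, ?_, ?_, ?_⟩ <;>
    · simp only [extendBy_last, extendBy_castSucc]
      split_ifs <;> omega
end

section
/- If u is an alternating permutation of even length 2n avoiding the pattern 2143 and the next-to-last entry of u is a = u_{2n-1}, then every value c with 1 ≤ c ≤ a+1 is active for u, i.e., the extension u ← c avoids 2143. -/
private lemma bump_reflect {x y c : ℕ}
    (h : (if c ≤ x then x + 1 else x) < (if c ≤ y then y + 1 else y)) : x < y := by
  split_ifs at h <;> omega

set_option maxHeartbeats 2000000 in
/-- values `1, ..., a + 1` are active, where `a` is the next-to-last entry. -/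
theorem stmt2 (n : ℕ) (hn : 1 ≤ n) (u : Fin (2 * n) → ℕ)
    (hu : IsPermWord (2 * n) u) (halt : Alternating u) (havoid : ¬ Contains2143 u)
    (a : ℕ) (ha : a = u ⟨2 * n - 2, by omega⟩)
    (c : ℕ) (hc1 : 1 ≤ c) (hc2 : c ≤ a + 1) :
    IsActive u c := by
  intro hcont
  obtain ⟨i1, i2, i3, i4, h12, h23, h34, hv21, hv14, hv43⟩ := hcont
  have hi1 : (i1 : ℕ) < 2 * n := by
    have := i4.isLt; have := (Fin.lt_iff_val_lt_val.mp h12)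
    have := (Fin.lt_iff_val_lt_val.mp h23); have := (Fin.lt_iff_val_lt_val.mp h34); omega
  have hi2 : (i2 : ℕ) < 2 * n := by
    have := i4.isLt; have := (Fin.lt_iff_val_lt_val.mp h23)
    have := (Fin.lt_iff_val_lt_val.mp h34); omega
  have hi3 : (i3 : ℕ) < 2 * n := by
    have := i4.isLt; have := (Fin.lt_iff_val_lt_val.mp h34); omega
  have h12' : (i1 : ℕ) < (i2 : ℕ) := Fin.lt_iff_val_lt_val.mp h12
  have h23' : (i2 : ℕ) < (i3 : ℕ) := Fin.lt_iff_val_lt_val.mp h23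
  have h34' : (i3 : ℕ) < (i4 : ℕ) := Fin.lt_iff_val_lt_val.mp h34
  have hw : ∀ (j : Fin (2 * n + 1)) (hj : (j : ℕ) < 2 * n),
      extendBy u c j = if c ≤ u ⟨j, hj⟩ then u ⟨j, hj⟩ + 1 else u ⟨j, hj⟩ := by
    intro j hj; simp [extendBy, hj]
  by_cases h4 : (i4 : ℕ) < 2 * n
  · -- all four indices are inside u
    rw [hw i1 hi1, hw i2 hi2] at hv21
    rw [hw i1 hi1, hw i4 h4] at hv14
    rw [hw i4 h4, hw i3 hi3] at hv43
    exact havoid ⟨⟨i1, hi1⟩, ⟨i2, hi2⟩, ⟨i3, hi3⟩, ⟨i4, h4⟩,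
      h12', h23', h34', bump_reflect hv21, bump_reflect hv14, bump_reflect hv43⟩
  · -- i4 is the appended position, value c
    have hi4 : (i4 : ℕ) = 2 * n := by have := i4.isLt; omega
    have hw4 : extendBy u c i4 = c := by simp [extendBy, hi4]
    rw [hw4, hw i1 hi1] at hv14
    rw [hw i1 hi1, hw i2 hi2] at hv21
    -- u i1 < c and u i2 < u i1
    have hu1c : u ⟨i1, hi1⟩ < c := by split_ifs at hv14 <;> omega
    have hv21' : u ⟨i2, hi2⟩ < u ⟨i1, hi1⟩ := bump_reflect hv21
    have hu1a : u ⟨i1, hi1⟩ ≤ a := by omega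
    have hn2 : 2 ≤ n := by omega
    -- the peak: u (2n-3) > u (2n-2) = a
    have hpeak : a < u ⟨2 * n - 3, by omega⟩ := by
      have := halt (2 * n - 3) (by omega)
      rw [if_neg (by omega)] at this
      simp only [show 2 * n - 3 + 1 = 2 * n - 2 from by omega] at this
      omega
    have hinj := hu.1
    -- i2 ≤ 2n - 2
    have hi2le : (i2 : ℕ) ≤ 2 * n - 2 := by omega
    rcases lt_or_eq_of_le hi2le with hlt | heq
    · rcases lt_or_eq_of_le (by omega : (i2 : ℕ) ≤ 2 * n - 3) with hlt' | heq'
      · -- i2 < 2n - 3 : use (i1, i2, 2n-3, 2n-2)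
        have hne : u ⟨i1, hi1⟩ ≠ a := by
          intro h
          have h2 : (⟨i1, hi1⟩ : Fin (2 * n)) = ⟨2 * n - 2, by omega⟩ :=
            hinj (by rw [h, ha])
          have h3 : (i1 : ℕ) = 2 * n - 2 := congrArg Fin.val h2
          omega
        refine havoid ⟨⟨i1, hi1⟩, ⟨i2, hi2⟩, ⟨2 * n - 3, by omega⟩, ⟨2 * n - 2, by omega⟩,
          Fin.mk_lt_mk.mpr h12', Fin.mk_lt_mk.mpr hlt', Fin.mk_lt_mk.mpr (by omega),
          hv21', by omega, by omega⟩
      · -- i2 = 2n - 3 : contradiction, u i2 > a ≥ u i1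
        have h2 : u ⟨i2, hi2⟩ = u ⟨2 * n - 3, by omega⟩ := by
          congr 1; exact Fin.ext heq'
        omega
    · -- i2 = 2n - 2 : u i2 = a, contradiction
      have h2 : u ⟨i2, hi2⟩ = a := by
        rw [ha]; congr 1; exact Fin.ext heq
      omega
end

section
/- Let S be a standard Young tableau of shape (n, n, n). For any pair of values (p, q) with S(1,n) + 1 ≤ p, S(2,n) + 2 ≤ q, p < q, and q ≤ 3n + 2, there is a unique standard Young tableau T of shape (n+1, n+1, n+1) whose first n columns are order-isomorphic to S and with T(1, n+1) = p, T(2, n+1) = q, T(3, n+1) = 3n+3. -/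
def bmp (p q x : ℕ) : ℕ := if x < p then x else if x + 1 < q then x + 1 else x + 2

lemma bmp_lt_iff {p q x y : ℕ} : bmp p q x < bmp p q y ↔ x < y := by
  unfold bmp; split_ifs <;> omega

def mkT (n p q : ℕ) (S : Fin 3 → Fin n → ℕ) : Fin 3 → Fin (n + 1) → ℕ :=
  fun i j => if h : (j : ℕ) < n then bmp p q (S i ⟨j, h⟩) else ![p, q, 3 * n + 3] i

lemma mkT_castSucc (n p q : ℕ) (S : Fin 3 → Fin n → ℕ) (i : Fin 3) (j : Fin n) :
    mkT n p q S i j.castSucc = bmp p q (S i j) := by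
  simp [mkT, j.isLt]

lemma mkT_last (n p q : ℕ) (S : Fin 3 → Fin n → ℕ) (i : Fin 3) :
    mkT n p q S i (Fin.last n) = ![p, q, 3 * n + 3] i := by
  simp [mkT]

lemma card_lt_of_bij {α : Type*} [Fintype α] [DecidableEq α] (F : α → ℕ) (m : ℕ)
    (hinj : Function.Injective F) (hrange : Set.range F = Set.Icc 1 m)
    (t : ℕ) (ht : t ≤ m + 1) :
    (Finset.univ.filter (fun a => F a < t)).card = t - 1 := by
  have himg : Finset.univ.image F = Finset.Icc 1 m := by
    ext y
    simp only [Finset.mem_image, Finset.mem_univ, true_and, Finset.mem_Icc]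
    constructor
    · rintro ⟨a, rfl⟩
      have : F a ∈ Set.Icc 1 m := hrange ▸ Set.mem_range_self a
      exact this
    · intro hy
      have : y ∈ Set.range F := hrange ▸ (Set.mem_Icc.mpr hy)
      exact this
  have h2 : (Finset.univ.filter (fun a => F a < t)).image F
      = (Finset.Icc 1 m).filter (fun y => y < t) := by
    rw [← himg]
    ext y
    simp only [Finset.mem_image, Finset.mem_filter, Finset.mem_univ, true_and]
    constructor
    · rintro ⟨a, ha, rfl⟩; exact ⟨⟨a, rfl⟩, ha⟩
    · rintro ⟨⟨a, rfl⟩, ha⟩; exact ⟨a, ha, rfl⟩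
  calc (Finset.univ.filter (fun a => F a < t)).card
      = ((Finset.univ.filter (fun a => F a < t)).image F).card :=
        (Finset.card_image_of_injective _ hinj).symm
    _ = ((Finset.Icc 1 m).filter (fun y => y < t)).card := by rw [h2]
    _ = (Finset.Icc 1 (t - 1)).card := by
        congr 1; ext y; simp only [Finset.mem_filter, Finset.mem_Icc]; omega
    _ = t - 1 := by rw [Nat.card_Icc]; omega


set_option maxHeartbeats 2000000 in
/-- unique child tableau with prescribed last column. -/
theorem stmt8 (n : ℕ) (hn : 1 ≤ n)
    (S : Fin 3 → Fin n → ℕ) (hS : IsSYT3 n S)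
    (p q : ℕ) (hp : S 0 ⟨n - 1, by omega⟩ + 1 ≤ p) (hq : S 1 ⟨n - 1, by omega⟩ + 2 ≤ q)
    (hpq : p < q) (hq2 : q ≤ 3 * n + 2) :
    ∃! T : Fin 3 → Fin (n + 1) → ℕ, IsSYT3 (n + 1) T ∧
      (∀ (i i' : Fin 3) (j j' : Fin n),
        S i j < S i' j' ↔ T i j.castSucc < T i' j'.castSucc) ∧
      T 0 (Fin.last n) = p ∧ T 1 (Fin.last n) = q ∧ T 2 (Fin.last n) = 3 * n + 3 := by
  -- basic facts about S
  have hmem : ∀ (i : Fin 3) (j : Fin n), 1 ≤ S i j ∧ S i j ≤ 3 * n := by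
    intro i j
    have : S i j ∈ Set.Icc 1 (3 * n) := hS.range_eq ▸ Set.mem_range_self (⟨i, j⟩ : Fin 3 × Fin n)
    exact this
  have hsurjS : ∀ y, 1 ≤ y → y ≤ 3 * n → ∃ (i : Fin 3) (j : Fin n), S i j = y := by
    intro y h1 h2
    have : y ∈ Set.range (fun pr : Fin 3 × Fin n => S pr.1 pr.2) :=
      hS.range_eq ▸ Set.mem_Icc.mpr ⟨h1, h2⟩
    obtain ⟨⟨i, j⟩, hij⟩ := this
    exact ⟨i, j, hij⟩
  have hp2 : 2 ≤ p := by have := (hmem 0 ⟨n - 1, by omega⟩).1; omega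
  have hrow_le : ∀ (i : Fin 3) (j : Fin n), S i j ≤ S i ⟨n - 1, by omega⟩ := by
    intro i j
    exact (hS.row_inc i).monotone (by simp [Fin.le_def]; omega)
  have hSp : ∀ j : Fin n, S 0 j < p := fun j => lt_of_le_of_lt (hrow_le 0 j) (by omega)
  have hSq : ∀ j : Fin n, S 1 j + 2 ≤ q := fun j => le_trans (by have := hrow_le 1 j; omega) hq
  have hbmp_mem : ∀ x, 1 ≤ x → x ≤ 3 * n →
      1 ≤ bmp p q x ∧ bmp p q x ≤ 3 * n + 2 ∧ bmp p q x ≠ p ∧ bmp p q x ≠ q := by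
    intro x h1 h2; unfold bmp; split_ifs <;> omega
  have hbmono : StrictMono (bmp p q) := fun _ _ h => bmp_lt_iff.mpr h
  have hbinj : Function.Injective (bmp p q) := hbmono.injective
  refine ⟨mkT n p q S, ⟨⟨?_, ?_, ?_, ?_⟩, ?_, ?_, ?_, ?_⟩, ?_⟩
  · -- injectivity
    rintro ⟨i, j⟩ ⟨i', j'⟩ h
    simp only at h
    rcases Fin.eq_castSucc_or_eq_last j with ⟨a, rfl⟩ | rfl <;>
      rcases Fin.eq_castSucc_or_eq_last j' with ⟨b, rfl⟩ | rfl
    · rw [mkT_castSucc, mkT_castSucc] at h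
      have hb : S i a = S i' b := hbinj h
      have := hS.inj (a₁ := (i, a)) (a₂ := (i', b)) hb
      simp only [Prod.mk.injEq] at this
      simp [this.1, this.2]
    · exfalso
      rw [mkT_castSucc, mkT_last] at h
      have := hbmp_mem (S i a) (hmem i a).1 (hmem i a).2
      fin_cases i' <;> simp at h <;> omega
    · exfalso
      rw [mkT_last, mkT_castSucc] at h
      have := hbmp_mem (S i' b) (hmem i' b).1 (hmem i' b).2
      fin_cases i <;> simp at h <;> omega
    · rw [mkT_last, mkT_last] at h
      have : i = i' := by fin_cases i <;> fin_cases i' <;> simp_all <;> omega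
      simp [this]
  · -- range
    ext y
    simp only [Set.mem_range, Set.mem_Icc, Prod.exists]
    constructor
    · rintro ⟨i, j, rfl⟩
      rcases Fin.eq_castSucc_or_eq_last j with ⟨a, rfl⟩ | rfl
      · rw [mkT_castSucc]
        have := hbmp_mem (S i a) (hmem i a).1 (hmem i a).2
        omega
      · rw [mkT_last]
        fin_cases i <;> simp <;> omega
    · rintro ⟨h1, h2⟩
      by_cases hyp : y = p
      · exact ⟨0, Fin.last n, by rw [mkT_last]; simp [hyp]⟩
      by_cases hyq : y = q
      · exact ⟨1, Fin.last n, by rw [mkT_last]; simp [hyq]⟩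
      by_cases hyl : y = 3 * n + 3
      · exact ⟨2, Fin.last n, by rw [mkT_last]; simp [hyl]⟩
      · set x := if y < p then y else if y < q then y - 1 else y - 2 with hx
        have hx1 : 1 ≤ x ∧ x ≤ 3 * n ∧ bmp p q x = y := by
          rw [hx]; unfold bmp; split_ifs <;> omega
        obtain ⟨i, j, hij⟩ := hsurjS x hx1.1 hx1.2.1
        exact ⟨i, j.castSucc, by rw [mkT_castSucc, hij]; exact hx1.2.2⟩
  · -- rows increasing
    intro i j j' hlt
    rcases Fin.eq_castSucc_or_eq_last j' with ⟨b, rfl⟩ | rfl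
    · rcases Fin.eq_castSucc_or_eq_last j with ⟨a, rfl⟩ | rfl
      · rw [mkT_castSucc, mkT_castSucc]
        exact bmp_lt_iff.mpr (hS.row_inc i (Fin.castSucc_lt_castSucc_iff.mp hlt))
      · exact absurd hlt (not_lt.mpr (Fin.le_last _))
    · rcases Fin.eq_castSucc_or_eq_last j with ⟨a, rfl⟩ | rfl
      · rw [mkT_castSucc, mkT_last]
        fin_cases i
        · have := hSp a; simp; unfold bmp; split_ifs <;> omega
        · have := hSq a; simp; unfold bmp; split_ifs <;> omega
        · have := (hmem 2 a).2; simp; unfold bmp; split_ifs <;> omega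
      · exact absurd hlt (lt_irrefl _)
  · -- columns increasing
    intro j i i' hlt
    rcases Fin.eq_castSucc_or_eq_last j with ⟨a, rfl⟩ | rfl
    · simp only [mkT_castSucc]
      exact bmp_lt_iff.mpr (hS.col_inc a hlt)
    · simp only [mkT_last]
      fin_cases i <;> fin_cases i' <;> simp_all <;> omega
  · -- order isomorphism
    intro i i' j j'
    rw [mkT_castSucc, mkT_castSucc]
    exact bmp_lt_iff.symm
  · rw [mkT_last]; simp
  · rw [mkT_last]; simp
  · rw [mkT_last]; simp
  · -- uniqueness
    rintro T' ⟨hT', hiso, h0, h1, h2⟩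
    funext i j
    rcases Fin.eq_castSucc_or_eq_last j with ⟨k, rfl⟩ | rfl
    · rw [mkT_castSucc]
      set t := T' i k.castSucc with ht
      set v := S i k with hv
      have hvm := hmem i k
      have htmem : 1 ≤ t ∧ t ≤ 3 * n + 3 := by
        have : t ∈ Set.Icc 1 (3 * (n + 1)) :=
          hT'.range_eq ▸ Set.mem_range_self (⟨i, k.castSucc⟩ : Fin 3 × Fin (n + 1))
        simpa using (by omega : 1 ≤ t ∧ t ≤ 3 * (n + 1) → 1 ≤ t ∧ t ≤ 3 * n + 3) this
      have hne : ∀ (i₀ : Fin 3), t ≠ T' i₀ (Fin.last n) := by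
        intro i₀ heq
        have := hT'.inj (a₁ := (i, k.castSucc)) (a₂ := (i₀, Fin.last n)) heq
        simp only [Prod.mk.injEq] at this
        have := congrArg (Fin.val) this.2
        simp at this
        omega
      have htp : t ≠ p := h0 ▸ hne 0
      have htq : t ≠ q := h1 ▸ hne 1
      have htl : t ≠ 3 * n + 3 := h2 ▸ hne 2
      -- counting
      have hcT : (Finset.univ.filter
          (fun pr : Fin 3 × Fin (n + 1) => T' pr.1 pr.2 < t)).card = t - 1 := by
        refine card_lt_of_bij _ (3 * (n + 1)) hT'.inj hT'.range_eq t (by omega)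
      have hcS : (Finset.univ.filter
          (fun pr : Fin 3 × Fin n => S pr.1 pr.2 < v)).card = v - 1 := by
        refine card_lt_of_bij _ (3 * n) hS.inj hS.range_eq v (by omega)
      rw [Finset.card_filter, Fintype.sum_prod_type] at hcT hcS
      have hsplit : ∀ i' : Fin 3,
          (∑ j' : Fin (n + 1), if T' i' j' < t then 1 else 0)
          = (∑ j' : Fin n, if S i' j' < v then 1 else 0)
            + (if T' i' (Fin.last n) < t then 1 else 0) := by
        intro i'
        rw [Fin.sum_univ_castSucc]
        congr 1
        refine Finset.sum_congr rfl (fun j' _ => ?_)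
        congr 1
        simp only [eq_iff_iff]
        exact (hiso i' i j' k).symm
      rw [Finset.sum_congr rfl (fun i' _ => hsplit i'), Finset.sum_add_distrib] at hcT
      have hS3 : (∑ i' : Fin 3, ∑ j' : Fin n, if S i' j' < v then 1 else 0) = v - 1 := hcS
      rw [hS3, Fin.sum_univ_three, h0, h1, h2] at hcT
      -- now conclude
      have : t = bmp p q v := by
        unfold bmp
        split_ifs at hcT ⊢ <;> omega
      exact this
    · rw [mkT_last]
      fin_cases i <;> simp [h0, h1, h2]
end

section
/- The number of standard Young tableaux of rectangular shape (n, n, n) equals 2·(3n)! / (n!·(n+1)!·(n+2)!). -/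
/-!
Recording, for `k = 1, …, 3n`, the row of a standard tableau that contains `k` gives a bijection
with ballot words in the letters `0, 1, 2` containing each letter `n` times: rows are recovered as
the sorted position sets of the letters, and the column condition says exactly that every prefix
contains at least as many `i`s as `i + 1`s. Deleting the last letter of a ballot word of content
`(a, b, c)` gives `f (a, b, c) = f (a - 1, b, c) + f (a, b - 1, c) + f (a, b, c - 1)`, the
terms that leave a non-partition being zero. The hook-length value
`m! (a - b + 1) (b - c + 1) (a - c + 2) / ((a + 2)! (b + 1)! c!)` satisfies the same recursion,
and at `a = b = c = n` it is `2 (3n)! / (n! (n + 1)! (n + 2)!)`.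
-/

open Finset
open scoped Nat

namespace LatticeWord

variable {α : Type*} [DecidableEq α] {m : ℕ}

def count (w : Fin m → α) (a : α) (t : ℕ) : ℕ := #{k | w k = a ∧ (k : ℕ) < t}

def content (w : Fin m → α) (a : α) : ℕ := count w a m

def IsBallot [Preorder α] (w : Fin m → α) : Prop := ∀ t, Antitone (count w · t)

noncomputable def ballotCount [Preorder α] (m : ℕ) (v : α → ℕ) : ℕ :=
  Nat.card {w : Fin m → α // IsBallot w ∧ content w = v}

lemma count_snoc (w : Fin m → α) (r a : α) (t : ℕ) :
    count (Fin.snoc w r : Fin (m + 1) → α) a t =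
      count w a t + if r = a ∧ m < t then 1 else 0 := by
  simp only [count, card_filter, Fin.sum_univ_castSucc, Fin.snoc_castSucc, Fin.snoc_last,
    Fin.val_castSucc, Fin.val_last]

lemma count_of_le (w : Fin m → α) (a : α) {t : ℕ} (ht : m ≤ t) :
    count w a t = content w a := by
  unfold content count
  congr 1
  ext k
  simp only [mem_filter, mem_univ, true_and]
  exact and_congr_right fun _ => iff_of_true (by omega) k.isLt

lemma content_snoc (w : Fin m → α) (r : α) :
    content (Fin.snoc w r : Fin (m + 1) → α) = content w + Pi.single r 1 := by
  ext a
  rw [content, count_snoc, count_of_le w a (by omega)]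
  by_cases h : r = a
  · subst h; simp
  · simp [h, Ne.symm h]

lemma content_eq_card (w : Fin m → α) (a : α) : content w a = #{k | w k = a} := by
  unfold content count
  simp

variable [Preorder α]

lemma IsBallot.antitone_content {w : Fin m → α} (hw : IsBallot w) : Antitone (content w) :=
  hw m

lemma isBallot_snoc_iff (w : Fin m → α) (r : α) :
    IsBallot (Fin.snoc w r : Fin (m + 1) → α) ↔
      IsBallot w ∧ Antitone (content (Fin.snoc w r : Fin (m + 1) → α)) := by
  have hinit {t} (ht : t ≤ m) :
      (count (Fin.snoc w r : Fin (m + 1) → α) · t) = (count w · t) := by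
    ext a
    rw [count_snoc, if_neg fun h => absurd h.2 (by omega), add_zero]
  refine ⟨fun h => ⟨fun t => ?_, h _⟩, fun ⟨hw, hv⟩ t => ?_⟩
  · rcases le_total t m with ht | ht
    · rw [← hinit ht]; exact h t
    · have : (count w · t) = (count w · m) := funext fun a => count_of_le w a ht
      rw [this, ← hinit le_rfl]; exact h m
  · rcases le_or_gt t m with ht | ht
    · rw [hinit ht]; exact hw t
    · have : (count (Fin.snoc w r : Fin (m + 1) → α) · t) =
          content (Fin.snoc w r : Fin (m + 1) → α) := funext fun a => count_of_le _ a ht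
      rw [this]; exact hv

lemma ballotCount_zero : ballotCount 0 (0 : α → ℕ) = 1 := by
  rw [ballotCount, Nat.card_eq_one_iff_unique]
  refine ⟨⟨fun _ _ => Subsingleton.elim _ _⟩, ⟨⟨Fin.elim0, fun t => ?_, ?_⟩⟩⟩
  · intro a b _; simp [count]
  · ext a; simp [content, count]

lemma card_ballot_add_single (v : α → ℕ) (r : α) :
    Nat.card {u : Fin m → α // IsBallot u ∧ content u + Pi.single r 1 = v + Pi.single r 1} =
      ballotCount m v := by
  simp only [add_left_inj]
  rfl

lemma card_ballot_add_single_of_eq_zero {v : α → ℕ} {r : α} (hr : v r = 0) :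
    Nat.card {u : Fin m → α // IsBallot u ∧ content u + Pi.single r 1 = v} = 0 := by
  refine Nat.card_eq_zero.2 (Or.inl ⟨fun ⟨u, _, hu⟩ => ?_⟩)
  have := congrFun hu r
  simp_all

lemma card_ballot_add_single_of_le {v : α → ℕ} {r r' : α} (hrr' : r < r')
    (hv : v r ≤ v r') :
    Nat.card {u : Fin m → α // IsBallot u ∧ content u + Pi.single r 1 = v} = 0 := by
  refine Nat.card_eq_zero.2 (Or.inl ⟨fun ⟨u, hu, huv⟩ => ?_⟩)
  have hr := congrFun huv r
  have hr' := congrFun huv r'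
  have := hu.antitone_content hrr'.le
  simp [hrr'.ne'] at hr hr'
  omega

variable [Fintype α]

theorem ballotCount_succ {v : α → ℕ} (hv : Antitone v) :
    ballotCount (m + 1) v =
      ∑ r, Nat.card {u : Fin m → α // IsBallot u ∧ content u + Pi.single r 1 = v} := by
  rw [← Nat.card_sigma]
  refine Nat.card_congr (((Equiv.subtypeProdEquivSigmaSubtype
    fun r u => IsBallot u ∧ content u + Pi.single r 1 = v).symm.trans
      ((Fin.snocEquiv fun _ => α).subtypeEquiv fun x => ?_)).symm)
  obtain ⟨r, u⟩ := x
  change _ ↔ IsBallot (Fin.snoc u r : Fin (m + 1) → α) ∧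
    content (Fin.snoc u r : Fin (m + 1) → α) = v
  rw [isBallot_snoc_iff, content_snoc]
  constructor
  · rintro ⟨hu, rfl⟩; exact ⟨⟨hu, hv⟩, rfl⟩
  · rintro ⟨⟨hu, -⟩, h⟩; exact ⟨hu, h⟩

lemma antitone_vec_three {a b c : ℕ} (hab : b ≤ a) (hbc : c ≤ b) : Antitone ![a, b, c] := by
  intro i j hij
  fin_cases i <;> fin_cases j <;> simp_all [Fin.le_def]; omega

-- The shape `(c + q + p, c + q, c)` is parametrized by its row differences, so that it is a
-- partition and the formula involves no subtraction.
def ThreeRowHookFormula (m : ℕ) : Prop :=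
  ∀ p q c, 3 * c + 2 * q + p = m → ballotCount m ![c + q + p, c + q, c] *
    ((c + q + p + 2)! * (c + q + 1)! * c !) = m ! * ((p + 1) * (q + 1) * (p + q + 2))

namespace ThreeRowHookFormula

variable {m p q c : ℕ} (ih : ThreeRowHookFormula m) (hm : 3 * c + 2 * q + p = m + 1)
include ih hm

lemma card_fiber_zero_mul :
    Nat.card {u : Fin m → Fin 3 //
        IsBallot u ∧ content u + Pi.single 0 1 = ![c + q + p, c + q, c]} *
        ((c + q + p + 2)! * (c + q + 1)! * c !) =
      m ! * (p * (q + 1) * (p + q + 1) * (c + q + p + 2)) := by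
  cases p with
  | zero => rw [card_ballot_add_single_of_le (r' := 1) (by decide) (by simp)]; simp
  | succ p =>
    have hv : ![c + q + (p + 1), c + q, c] = ![c + q + p, c + q, c] + Pi.single 0 1 := by
      ext i; fin_cases i <;> simp; omega
    rw [hv, card_ballot_add_single, show c + q + (p + 1) + 2 = c + q + p + 2 + 1 by ring,
      Nat.factorial_succ]
    linear_combination (c + q + p + 2 + 1) * ih p q c (by omega)

lemma card_fiber_one_mul :
    Nat.card {u : Fin m → Fin 3 //
        IsBallot u ∧ content u + Pi.single 1 1 = ![c + q + p, c + q, c]} *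
        ((c + q + p + 2)! * (c + q + 1)! * c !) =
      m ! * ((p + 2) * q * (p + q + 2) * (c + q + 1)) := by
  cases q with
  | zero => rw [card_ballot_add_single_of_le (r' := 2) (by decide) (by simp)]; simp
  | succ q =>
    have hv : ![c + (q + 1) + p, c + (q + 1), c] =
        ![c + q + (p + 1), c + q, c] + Pi.single 1 1 := by
      ext i; fin_cases i <;> simp <;> omega
    rw [hv, card_ballot_add_single, show c + (q + 1) + p + 2 = c + q + (p + 1) + 2 by ring,
      show c + (q + 1) + 1 = c + q + 1 + 1 by ring, Nat.factorial_succ (c + q + 1)]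
    linear_combination (c + q + 1 + 1) * ih (p + 1) q c (by omega)

lemma card_fiber_two_mul :
    Nat.card {u : Fin m → Fin 3 //
        IsBallot u ∧ content u + Pi.single 2 1 = ![c + q + p, c + q, c]} *
        ((c + q + p + 2)! * (c + q + 1)! * c !) =
      m ! * ((p + 1) * (q + 2) * (p + q + 3) * c) := by
  cases c with
  | zero => rw [card_ballot_add_single_of_eq_zero (by simp)]; simp
  | succ c =>
    have hv : ![c + 1 + q + p, c + 1 + q, c + 1] =
        ![c + (q + 1) + p, c + (q + 1), c] + Pi.single 2 1 := by
      ext i; fin_cases i <;> simp <;> omega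
    rw [hv, card_ballot_add_single, show c + 1 + q + p + 2 = c + (q + 1) + p + 2 by ring,
      show c + 1 + q + 1 = c + (q + 1) + 1 by ring, Nat.factorial_succ c]
    linear_combination (c + 1) * ih p (q + 1) c (by omega)

end ThreeRowHookFormula

theorem threeRowHookFormula (m : ℕ) : ThreeRowHookFormula m := by
  induction m with
  | zero =>
    intro p q c hm
    obtain ⟨rfl, rfl, rfl⟩ : p = 0 ∧ q = 0 ∧ c = 0 := by omega
    have : ![0 + 0 + 0, 0 + 0, 0] = (0 : Fin 3 → ℕ) := by ext i; fin_cases i <;> rfl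
    simp [this, ballotCount_zero]
  | succ m ih =>
    intro p q c hm
    rw [ballotCount_succ (antitone_vec_three (by omega) (by omega)), Fin.sum_univ_three,
      add_mul, add_mul, ih.card_fiber_zero_mul hm, ih.card_fiber_one_mul hm,
      ih.card_fiber_two_mul hm, Nat.factorial_succ, ← hm]
    -- the three numerators add up to `(3 * c + 2 * q + p) * (p + 1) * (q + 1) * (p + q + 2)`
    ring

end LatticeWord

open LatticeWord

theorem le_of_card_filter_le {β : Type*} [LinearOrder β] {n : ℕ} {a b : Fin n → β}
    (ha : Monotone a) (hb : Monotone b) (h : ∀ t, #{j | b j ≤ t} ≤ #{j | a j ≤ t}) :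
    a ≤ b := by
  intro j
  by_contra! hj
  have hupper : #{j' | a j' ≤ b j} ≤ j := by
    calc #{j' | a j' ≤ b j} ≤ #(Iio j) := card_le_card fun j' hj' => by
          simp only [mem_filter, mem_univ, true_and] at hj'
          exact mem_Iio.2 (lt_of_not_ge fun hjj' => (hj.trans_le (ha hjj')).not_ge hj')
      _ = j := Fin.card_Iio j
  have hlower : (j : ℕ) + 1 ≤ #{j' | b j' ≤ b j} := by
    calc (j : ℕ) + 1 = #(Iic j) := (Fin.card_Iic j).symm
      _ ≤ #{j' | b j' ≤ b j} := card_le_card fun j' hj' => by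
          simpa using hb (mem_Iic.1 hj')
  have := h (b j)
  omega

section RowWord

variable {ι : Type*} {n m : ℕ}

def IsRowWord (T : ι → Fin n → ℕ) (w : Fin m → ι) : Prop :=
  ∀ i, Set.range (T i) = (fun k : Fin m => (k : ℕ) + 1) '' {k | w k = i}

variable {T T' : ι → Fin n → ℕ} {w w' : Fin m → ι}

lemma IsRowWord.mem_range_iff (h : IsRowWord T w) (i : ι) (k : Fin m) :
    (k : ℕ) + 1 ∈ Set.range (T i) ↔ w k = i := by
  rw [h]
  exact ⟨fun ⟨k', hk', hkk'⟩ => Fin.ext (by simpa using hkk') ▸ hk',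
    fun hk => ⟨k, hk, rfl⟩⟩

lemma IsRowWord.exists_eq (h : IsRowWord T w) (i : ι) (j : Fin n) :
    ∃ k, w k = i ∧ (k : ℕ) + 1 = T i j :=
  (h i).subset ⟨j, rfl⟩

lemma IsRowWord.word_unique (h : IsRowWord T w) (h' : IsRowWord T w') : w = w' :=
  funext fun k => ((h'.mem_range_iff _ k).1 ((h.mem_range_iff _ k).2 rfl)).symm

lemma IsRowWord.tableau_unique (h : IsRowWord T w) (h' : IsRowWord T' w)
    (hT : ∀ i, StrictMono (T i)) (hT' : ∀ i, StrictMono (T' i)) : T = T' :=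
  funext fun i => ((hT i).range_inj (hT' i)).1 ((h i).trans (h' i).symm)

lemma IsRowWord.range_eq (h : IsRowWord T w) :
    Set.range (fun p : ι × Fin n => T p.1 p.2) = Set.Icc 1 m := by
  ext x
  constructor
  · rintro ⟨⟨i, j⟩, rfl⟩
    obtain ⟨k, -, hk⟩ := h.exists_eq i j
    simp only [Set.mem_Icc, ← hk]
    omega
  · rintro ⟨hx1, hxm⟩
    obtain ⟨j, hj⟩ := (h.mem_range_iff _ ⟨x - 1, by omega⟩).2 rfl
    exact ⟨(_, j), hj.trans (by simp only; omega)⟩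

lemma IsRowWord.injective (h : IsRowWord T w) (hT : ∀ i, Function.Injective (T i)) :
    Function.Injective (fun p : ι × Fin n => T p.1 p.2) := by
  rintro ⟨i, j⟩ ⟨i', j'⟩ (hjj' : T i j = T i' j')
  obtain ⟨k, hk, hkj⟩ := h.exists_eq i j
  have hi' : w k = i' := (h.mem_range_iff i' k).1 ⟨j', hjj'.symm.trans hkj.symm⟩
  subst hk hi'
  rw [hT _ hjj']

theorem exists_isRowWord (hinj : Function.Injective (fun p : ι × Fin n => T p.1 p.2))
    (hrange : Set.range (fun p : ι × Fin n => T p.1 p.2) = Set.Icc 1 m) :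
    ∃ w : Fin m → ι, IsRowWord T w := by
  have hex (k : Fin m) : ∃ p : ι × Fin n, T p.1 p.2 = k + 1 := by
    have hk : (k : ℕ) + 1 ∈ Set.Icc 1 m := ⟨by omega, k.isLt⟩
    rwa [← hrange] at hk
  choose P hP using hex
  refine ⟨fun k => (P k).1, fun i => Set.ext fun x => ⟨?_, ?_⟩⟩
  · rintro ⟨j, rfl⟩
    have hj : T i j ∈ Set.Icc 1 m := hrange ▸ ⟨(i, j), rfl⟩
    let k : Fin m := ⟨T i j - 1, by grind⟩
    have hk : (k : ℕ) + 1 = T i j := by grind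
    exact ⟨k, congrArg Prod.fst (hinj (a₁ := P k) (a₂ := (i, j)) ((hP k).trans hk)), hk⟩
  · rintro ⟨k, rfl, rfl⟩
    exact ⟨(P k).2, hP k⟩

variable [DecidableEq ι]

lemma IsRowWord.count_eq (h : IsRowWord T w) {i : ι} (hT : Function.Injective (T i)) (t : ℕ) :
    count w i t = #{j | T i j ≤ t} := by
  have hsucc : Function.Injective (fun k : Fin m => (k : ℕ) + 1) := fun a b hab =>
    Fin.ext (by simpa using hab)
  rw [count, ← card_image_of_injective _ hT, ← card_image_of_injective _ hsucc]
  congr 1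
  ext x
  simp only [mem_image, mem_filter, mem_univ, true_and]
  constructor
  · rintro ⟨k, ⟨hk, hkt⟩, rfl⟩
    obtain ⟨j, hj⟩ := (h.mem_range_iff i k).2 hk
    exact ⟨j, by omega, hj⟩
  · rintro ⟨j, hjt, rfl⟩
    obtain ⟨k, hk, hkj⟩ := h.exists_eq i j
    exact ⟨k, ⟨hk, by omega⟩, hkj⟩

theorem IsRowWord.isBallot [Preorder ι] (h : IsRowWord T w) (hT : ∀ i, Function.Injective (T i))
    (hcol : ∀ j, Monotone (T · j)) : IsBallot w := by
  intro t i i' hii'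
  simp only [h.count_eq (hT _)]
  exact card_le_card fun j hj => by
    simp only [mem_filter, mem_univ, true_and] at hj ⊢
    exact (hcol j hii').trans hj

theorem IsRowWord.content_eq (h : IsRowWord T w) (hT : ∀ i, Function.Injective (T i)) (i : ι) :
    content w i = n := by
  rw [content, h.count_eq (hT i), filter_true_of_mem, card_univ, Fintype.card_fin]
  intro j _
  have : T i j ∈ Set.Icc 1 m := h.range_eq ▸ ⟨(i, j), rfl⟩
  exact this.2

theorem IsRowWord.monotone_col [Preorder ι] (h : IsRowWord T w) (hT : ∀ i, StrictMono (T i))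
    (hw : IsBallot w) (j : Fin n) : Monotone (T · j) := fun i i' hii' =>
  le_of_card_filter_le (hT i).monotone (hT i').monotone
    (fun t => by simpa only [h.count_eq (hT _).injective] using hw t hii') j

theorem exists_strictMono_isRowWord (hw : ∀ i, content w i = n) :
    ∃ T : ι → Fin n → ℕ, (∀ i, StrictMono (T i)) ∧ IsRowWord T w := by
  have hcard (i : ι) : #{k | w k = i} = n := (content_eq_card w i).symm.trans (hw i)
  refine ⟨fun i j => (({k | w k = i} : Finset (Fin m)).orderEmbOfFin (hcard i) j : ℕ) + 1,
    fun i j j' hjj' => ?_, fun i => ?_⟩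
  · simpa using (orderEmbOfFin _ (hcard i)).strictMono hjj'
  · change Set.range ((fun k : Fin m => (k : ℕ) + 1) ∘ orderEmbOfFin _ (hcard i)) = _
    rw [Set.range_comp, range_orderEmbOfFin]
    simp

end RowWord

section SYT3

variable {n : ℕ} {T : Fin 3 → Fin n → ℕ} {w : Fin (3 * n) → Fin 3}

theorem IsRowWord.isSYT3 (h : IsRowWord T w) (hT : ∀ i, StrictMono (T i)) (hw : IsBallot w) :
    IsSYT3 n T where
  inj := h.injective fun i => (hT i).injective
  range_eq := h.range_eq
  row_inc := hT
  col_inc j := (h.monotone_col hT hw j).strictMono_of_injective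
    fun i i' hii' => congrArg Prod.fst
      (h.injective (fun i => (hT i).injective) (a₁ := (i, j)) (a₂ := (i', j)) hii')

theorem card_isSYT3 (n : ℕ) :
    Nat.card {T : Fin 3 → Fin n → ℕ // IsSYT3 n T} =
      ballotCount (3 * n) fun _ : Fin 3 => n := by
  have hword (T : {T : Fin 3 → Fin n → ℕ // IsSYT3 n T}) :=
    exists_isRowWord T.2.inj T.2.range_eq
  choose w hw using hword
  refine Nat.card_eq_of_bijective (fun T => ⟨w T, ?_, ?_⟩)
    ⟨fun T T' hTT' => ?_, fun u => ?_⟩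
  · exact (hw T).isBallot (fun i => (T.2.row_inc i).injective) fun j => (T.2.col_inc j).monotone
  · exact funext ((hw T).content_eq fun i => (T.2.row_inc i).injective)
  · have hww' : w T = w T' := congrArg Subtype.val hTT'
    exact Subtype.ext ((hw T).tableau_unique (hww' ▸ hw T') T.2.row_inc T'.2.row_inc)
  · obtain ⟨T, hT, hTu⟩ := exists_strictMono_isRowWord (fun i => congrFun u.2.2 i)
    exact ⟨⟨T, hTu.isSYT3 hT u.2.1⟩, Subtype.ext ((hw _).word_unique hTu)⟩

end SYT3

/-- `|SYT(n, n, n)| = 2 (3n)! / (n! (n+1)! (n+2)!)`. -/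
theorem stmt13 (n : ℕ) :
    Nat.card {T : Fin 3 → Fin n → ℕ // IsSYT3 n T} *
      (Nat.factorial n * Nat.factorial (n + 1) * Nat.factorial (n + 2)) =
      2 * Nat.factorial (3 * n) := by
  have h := threeRowHookFormula (3 * n) 0 0 n (by ring)
  simp only [add_zero, zero_add, mul_one, one_mul] at h
  have hv : ![n, n, n] = fun _ : Fin 3 => n := by ext i; fin_cases i <;> rfl
  rw [card_isSYT3, ← hv]
  linear_combination h
end
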